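/- Let G : ℝ → ℝ satisfy G(x) > 0 and F(G(x)) = x for all x ∈ (0, 1/e). Then G(x) ~ 1/√(2 log(1/x)) as x → 0⁺; that is, G(x) · √(2 log(1/x)) tends to 1 as x → 0⁺. -/

import Mathlib

/-!
For `v ∈ (0, u]` the integrand `φ(1/v + v/2)` is at most `exp (-1/(2u²))`, while on
`[u(1-u), u]`, an interval of length `u²`, it is at least `φ(1/(u(1-u)) + u/2)`. Taking
logarithms, both bounds give `2 u² log (1 / F u) → 1` as `u → 0⁺`. Since `F` is positive and
increasing, `F (G x) = x → 0` forces `G x → 0⁺`, and substituting `u = G x` gives the claim.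
-/

open Real Set Filter

/-- Standard normal density. -/
noncomputable def stdNormalPDF (x : ℝ) : ℝ :=
  Real.exp (-x ^ 2 / 2) / Real.sqrt (2 * Real.pi)

/-- `F x = ∫_0^x φ(1/v + v/2) dv`. -/
noncomputable def F (x : ℝ) : ℝ :=
  ∫ v in (0 : ℝ)..x, stdNormalPDF (1 / v + v / 2)

open MeasureTheory Topology

lemma one_le_sqrt_two_mul_pi : 1 ≤ √(2 * π) :=
  Real.one_le_sqrt.2 (by nlinarith [pi_gt_three])

lemma stdNormalPDF_pos (x : ℝ) : 0 < stdNormalPDF x := by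
  unfold stdNormalPDF
  positivity

lemma stdNormalPDF_le_exp (x : ℝ) : stdNormalPDF x ≤ exp (-x ^ 2 / 2) :=
  div_le_self (exp_pos _).le one_le_sqrt_two_mul_pi

lemma stdNormalPDF_le_one (x : ℝ) : stdNormalPDF x ≤ 1 :=
  (stdNormalPDF_le_exp x).trans (exp_le_one_iff.2 (by nlinarith [sq_nonneg x]))

lemma log_stdNormalPDF (x : ℝ) : log (stdNormalPDF x) = -x ^ 2 / 2 - log (2 * π) / 2 := by
  rw [stdNormalPDF, log_div (exp_ne_zero _) (by positivity), log_exp, log_sqrt (by positivity)]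

lemma stdNormalPDF_antitoneOn : AntitoneOn stdNormalPDF (Ici 0) := by
  intro x hx y _ hxy
  unfold stdNormalPDF
  gcongr

lemma continuous_stdNormalPDF : Continuous stdNormalPDF := by
  unfold stdNormalPDF
  fun_prop

lemma intervalIntegrable_stdNormalPDF_comp {g : ℝ → ℝ} (hg : Measurable g) (a b : ℝ) :
    IntervalIntegrable (fun v => stdNormalPDF (g v)) volume a b := by
  refine (intervalIntegrable_const (c := (1 : ℝ))).mono_fun'
    (continuous_stdNormalPDF.measurable.comp hg).aestronglyMeasurable
    (Eventually.of_forall fun v => ?_)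
  simpa [abs_of_nonneg ((stdNormalPDF_pos _).le)] using stdNormalPDF_le_one (g v)

lemma F_eq_add_integral (a b : ℝ) :
    F b = F a + ∫ v in a..b, stdNormalPDF (1 / v + v / 2) :=
  (intervalIntegral.integral_add_adjacent_intervals
    (intervalIntegrable_stdNormalPDF_comp (by fun_prop) _ _)
    (intervalIntegrable_stdNormalPDF_comp (by fun_prop) _ _)).symm

lemma F_monotoneOn : MonotoneOn F (Ici 0) := by
  intro s _ t _ hst
  rw [F_eq_add_integral s t]
  exact le_add_of_nonneg_right
    (intervalIntegral.integral_nonneg hst fun v _ => (stdNormalPDF_pos _).le)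

lemma F_le_mul_exp {t : ℝ} (ht : 0 < t) : F t ≤ t * exp (-1 / (2 * t ^ 2)) := by
  have hbound : ∀ v ∈ Ioo 0 t, stdNormalPDF (1 / v + v / 2) ≤ exp (-1 / (2 * t ^ 2)) := by
    rintro v ⟨hv0, hvt⟩
    refine (stdNormalPDF_le_exp _).trans (exp_le_exp.2 ?_)
    have hinv : 1 / t ^ 2 ≤ 1 / v ^ 2 := one_div_le_one_div_of_le (by positivity) (by gcongr)
    have hsq : (1 / v + v / 2) ^ 2 = 1 / v ^ 2 + 1 + v ^ 2 / 4 := by field_simp; ring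
    rw [hsq, show -1 / (2 * t ^ 2) = -(1 / t ^ 2) / 2 by ring]
    nlinarith [sq_nonneg v]
  calc F t ≤ ∫ _ in (0 : ℝ)..t, exp (-1 / (2 * t ^ 2)) :=
        intervalIntegral.integral_mono_on_of_le_Ioo ht.le
          (intervalIntegrable_stdNormalPDF_comp (by fun_prop) _ _) intervalIntegrable_const hbound
    _ = t * exp (-1 / (2 * t ^ 2)) := by simp

lemma F_nonneg {t : ℝ} (ht : 0 ≤ t) : 0 ≤ F t :=
  intervalIntegral.integral_nonneg ht fun _ _ => (stdNormalPDF_pos _).le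

lemma mul_stdNormalPDF_le_F {s t : ℝ} (hs : 0 < s) (hst : s ≤ t) :
    (t - s) * stdNormalPDF (1 / s + t / 2) ≤ F t := by
  have hbound : ∀ v ∈ Icc s t, stdNormalPDF (1 / s + t / 2) ≤ stdNormalPDF (1 / v + v / 2) := by
    rintro v ⟨hsv, hvt⟩
    have hv : 0 < v := hs.trans_le hsv
    have ht : 0 < t := hv.trans_le hvt
    exact stdNormalPDF_antitoneOn (by positivity : (0 : ℝ) ≤ 1 / v + v / 2)
      (by positivity : (0 : ℝ) ≤ 1 / s + t / 2) (by gcongr)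
  calc (t - s) * stdNormalPDF (1 / s + t / 2) = ∫ _ in s..t, stdNormalPDF (1 / s + t / 2) := by
        simp
    _ ≤ ∫ v in s..t, stdNormalPDF (1 / v + v / 2) :=
        intervalIntegral.integral_mono_on hst intervalIntegrable_const
          (intervalIntegrable_stdNormalPDF_comp (by fun_prop) _ _) hbound
    _ ≤ F t := by
        rw [F_eq_add_integral s t]
        exact le_add_of_nonneg_left (F_nonneg hs.le)

lemma F_pos {t : ℝ} (ht : 0 < t) : 0 < F t :=
  (mul_pos (by linarith) (stdNormalPDF_pos _)).trans_le
    (mul_stdNormalPDF_le_F (half_pos ht) (half_le_self ht.le))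

lemma one_le_two_mul_log_inv_F_mul_sq {u : ℝ} (hu0 : 0 < u) (hu1 : u ≤ 1) :
    1 ≤ 2 * log (1 / F u) * u ^ 2 := by
  have hF : F u ≤ exp (-1 / (2 * u ^ 2)) :=
    (F_le_mul_exp hu0).trans (mul_le_of_le_one_left (exp_pos _).le hu1)
  have hlog : log (F u) ≤ -1 / (2 * u ^ 2) := (log_le_iff_le_exp (F_pos hu0)).2 hF
  rw [one_div, log_inv]
  calc 1 = 2 * (1 / (2 * u ^ 2)) * u ^ 2 := by field_simp
    _ ≤ 2 * -log (F u) * u ^ 2 := by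
        gcongr
        rw [neg_div] at hlog
        linarith

lemma two_mul_log_inv_F_mul_sq_le {u : ℝ} (hu0 : 0 < u) (hu1 : u < 1) :
    2 * log (1 / F u) * u ^ 2 ≤
      (1 / (1 - u) + u ^ 2 / 2) ^ 2 + u ^ 2 * log (2 * π) - 4 * u * (u * log u) := by
  set A := 1 / (u * (1 - u)) + u / 2
  have hF : u ^ 2 * stdNormalPDF A ≤ F u := by
    have := mul_stdNormalPDF_le_F (s := u * (1 - u)) (t := u) (by nlinarith) (by nlinarith)
    rwa [show u - u * (1 - u) = u ^ 2 by ring] at this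
  have hlog : 2 * log u + (-A ^ 2 / 2 - log (2 * π) / 2) ≤ log (F u) := by
    have := log_le_log (mul_pos (by positivity) (stdNormalPDF_pos A)) hF
    rwa [log_mul (by positivity) (stdNormalPDF_pos A).ne', log_pow, log_stdNormalPDF,
      Nat.cast_ofNat] at this
  have huA : u * A = 1 / (1 - u) + u ^ 2 / 2 := by
    have : 1 - u ≠ 0 := by linarith
    simp only [A]
    field_simp
  rw [one_div, log_inv, ← huA]
  calc 2 * -log (F u) * u ^ 2 ≤ 2 * (A ^ 2 / 2 + log (2 * π) / 2 - 2 * log u) * u ^ 2 := by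
        gcongr
        linarith
    _ = _ := by ring

lemma tendsto_two_mul_log_inv_F_mul_sq :
    Tendsto (fun u => 2 * log (1 / F u) * u ^ 2) (𝓝[>] 0) (𝓝 1) := by
  have hupper : Tendsto
      (fun u => (1 / (1 - u) + u ^ 2 / 2) ^ 2 + u ^ 2 * log (2 * π) - 4 * u * (u * log u))
      (𝓝[>] 0) (𝓝 1) := by
    have hc : ContinuousAt
        (fun u => (1 / (1 - u) + u ^ 2 / 2) ^ 2 + u ^ 2 * log (2 * π) - 4 * u * (u * log u)) 0 :=
      ((((continuousAt_const.div (continuousAt_const.sub continuousAt_id) (by norm_num)).add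
        (by fun_prop)).pow 2).add (by fun_prop)).sub
        ((continuousAt_const.mul continuousAt_id).mul continuous_mul_log.continuousAt)
    simpa using hc.tendsto.mono_left nhdsWithin_le_nhds
  have hunit : ∀ᶠ u in 𝓝[>] (0 : ℝ), u ∈ Ioo 0 1 := Ioo_mem_nhdsGT one_pos
  exact tendsto_of_tendsto_of_tendsto_of_le_of_le' tendsto_const_nhds hupper
    (hunit.mono fun u hu => one_le_two_mul_log_inv_F_mul_sq hu.1 hu.2.le)
    (hunit.mono fun u hu => two_mul_log_inv_F_mul_sq_le hu.1 hu.2)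

lemma tendsto_nhdsGT_zero_of_tendsto_F_comp {α : Type*} {l : Filter α} {G : α → ℝ}
    (hFG : Tendsto (fun x => F (G x)) l (𝓝 0)) (hpos : ∀ᶠ x in l, 0 < G x) :
    Tendsto G l (𝓝[>] 0) := by
  refine tendsto_nhdsWithin_iff.2 ⟨tendsto_order.2 ⟨fun c hc => hpos.mono fun x hx => hc.trans hx,
    fun c hc => ?_⟩, hpos⟩
  filter_upwards [hpos, hFG.eventually (gt_mem_nhds (F_pos hc))] with x hx hxc
  by_contra! h
  exact hxc.not_ge (F_monotoneOn hc.le hx.le h)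

/-- `G(x) ~ 1/√(2 log(1/x))` as `x → 0⁺`, where `G` inverts `F`. -/
theorem F_inv_equiv (G : ℝ → ℝ)
    (hGpos : ∀ x ∈ Set.Ioo 0 (1 / Real.exp 1), 0 < G x)
    (hG : ∀ x ∈ Set.Ioo 0 (1 / Real.exp 1), F (G x) = x) :
    Filter.Tendsto (fun x : ℝ => G x * Real.sqrt (2 * Real.log (1 / x)))
      (nhdsWithin 0 (Set.Ioi 0)) (nhds 1) := by
  have hx : ∀ᶠ x in 𝓝[>] (0 : ℝ), x ∈ Ioo 0 (1 / exp 1) := Ioo_mem_nhdsGT (by positivity)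
  have hFG : Tendsto (fun x => F (G x)) (𝓝[>] 0) (𝓝 0) :=
    (tendsto_id.mono_left nhdsWithin_le_nhds).congr' (hx.mono fun x hx => (hG x hx).symm)
  have hG0 := tendsto_nhdsGT_zero_of_tendsto_F_comp hFG (hx.mono hGpos)
  have hlim := (continuous_sqrt.tendsto 1).comp (tendsto_two_mul_log_inv_F_mul_sq.comp hG0)
  rw [sqrt_one] at hlim
  refine hlim.congr' (hx.mono fun x hx => ?_)
  rw [Function.comp_apply, Function.comp_apply, hG x hx, sqrt_mul' _ (sq_nonneg _),
    sqrt_sq (hGpos x hx).le, mul_comm]
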